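/- Let n ≥ 2 and M ≥ 2 be integers and let h : [-1,1) → ℝ be absolutely monotone, i.e., infinitely differentiable with h^{(i)}(t) ≥ 0 for all integers i ≥ 0 and all t ∈ [-1,1). Then every code C ⊆ H(n,2) of M points satisfies ∑_{x,y ∈ C, x ≠ y} h(1 − 2·d_H(x,y)/n) ≥ M(M−1)·h(−1/(M−1)). -/

import Mathlib

/-- `h` is absolutely monotone on `[-1,1)`: it is infinitely differentiable there and all
its derivatives are nonnegative there. -/
def AbsolutelyMonotone (h : ℝ → ℝ) : Prop :=
  ContDiffOn ℝ (⊤ : ℕ∞) h (Set.Ico (-1 : ℝ) 1) ∧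
    ∀ i : ℕ, ∀ t ∈ Set.Ico (-1 : ℝ) 1,
      0 ≤ iteratedDerivWithin i h (Set.Ico (-1 : ℝ) 1) t

/-- The `h`-energy of a binary code `C ⊆ H(n,2)`: the sum of `h(1 - 2 d_H(x,y)/n)` over
ordered pairs of distinct codewords of `C`. -/
noncomputable def hammingEnergy (n : ℕ) (h : ℝ → ℝ) (C : Finset (Fin n → Fin 2)) : ℝ :=
  ∑ p ∈ C.offDiag, h (1 - 2 * (hammingDist p.1 p.2 : ℝ) / n)

section Aux

open Set

lemma absMono.monotoneOn {h : ℝ → ℝ} (hh : AbsolutelyMonotone h) :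
    MonotoneOn h (Set.Ico (-1 : ℝ) 1) := by
  set s : Set ℝ := Set.Ico (-1 : ℝ) 1 with hs
  have uds : UniqueDiffOn ℝ s := uniqueDiffOn_Ico (-1) 1
  have hd : DifferentiableOn ℝ h s := hh.1.differentiableOn (by simp)
  refine monotoneOn_of_hasDerivWithinAt_nonneg (convex_Ico _ _) hh.1.continuousOn
    (f' := derivWithin h s) (fun x hx => ?_) (fun x hx => ?_)
  · exact ((hd x (interior_subset hx)).hasDerivWithinAt).mono interior_subset
  · have hxs : x ∈ s := interior_subset hx
    rw [← iteratedDerivWithin_one]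
    exact hh.2 1 x hxs

lemma absMono.convexOn {h : ℝ → ℝ} (hh : AbsolutelyMonotone h) :
    ConvexOn ℝ (Set.Ico (-1 : ℝ) 1) h := by
  set s : Set ℝ := Set.Ico (-1 : ℝ) 1 with hs
  have uds : UniqueDiffOn ℝ s := uniqueDiffOn_Ico (-1) 1
  have hd : DifferentiableOn ℝ h s := hh.1.differentiableOn (by simp)
  have hd' : DifferentiableOn ℝ (derivWithin h s) s :=
    (hh.1.derivWithin (m := 1) uds (by exact WithTop.coe_le_coe.mpr (le_top (a := ((1 + 1 : ℕ) : ℕ∞))))).differentiableOn (by simp)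
  refine convexOn_of_hasDerivWithinAt2_nonneg (convex_Ico _ _) hh.1.continuousOn
    (f' := derivWithin h s) (f'' := derivWithin (derivWithin h s) s)
    (fun x hx => ?_) (fun x hx => ?_) (fun x hx => ?_)
  · exact ((hd x (interior_subset hx)).hasDerivWithinAt).mono interior_subset
  · exact ((hd' x (interior_subset hx)).hasDerivWithinAt).mono interior_subset
  · have hxs : x ∈ s := interior_subset hx
    have h2 : iteratedDerivWithin 2 h s x = derivWithin (derivWithin h s) s x := by
      rw [iteratedDerivWithin_succ]
      exact derivWithin_congr (fun y hy => congrFun iteratedDerivWithin_one y)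
        (congrFun iteratedDerivWithin_one x)
    rw [← h2]
    exact hh.2 2 x hxs

end Aux

/-- The first-level universal lower bound for energy in the binary Hamming space. -/
theorem ulb_energy_hamming_first_level
    (n M : ℕ) (hn : 2 ≤ n) (hM : 2 ≤ M) (h : ℝ → ℝ) (hh : AbsolutelyMonotone h)
    (C : Finset (Fin n → Fin 2)) (hcard : C.card = M) :
    (M : ℝ) * ((M : ℝ) - 1) * h (-1 / ((M : ℝ) - 1)) ≤ hammingEnergy n h C := by
  classical
  have hn0 : (0 : ℝ) < n := by positivity
  have hM1 : (1 : ℝ) ≤ (M : ℝ) - 1 := by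
    have : (2 : ℝ) ≤ M := by exact_mod_cast hM
    linarith
  set f : (Fin n → Fin 2) × (Fin n → Fin 2) → ℝ :=
    fun p => 1 - 2 * (hammingDist p.1 p.2 : ℝ) / n with hf
  -- sign vectors
  set E : (Fin n → Fin 2) → Fin n → ℝ := fun x i => if x i = 0 then 1 else -1 with hE
  have key : ∀ x y : Fin n → Fin 2,
      ∑ i, E x i * E y i = (n : ℝ) - 2 * (hammingDist x y : ℝ) := by
    intro x y
    have h1 : ∀ i, E x i * E y i = 1 - 2 * (if x i = y i then (0 : ℝ) else 1) := by
      intro i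
      have hab : ∀ a b : Fin 2,
          (if a = 0 then (1:ℝ) else -1) * (if b = 0 then (1:ℝ) else -1)
            = 1 - 2 * (if a = b then (0:ℝ) else 1) := by
        intro a b
        fin_cases a <;> fin_cases b <;> norm_num
      exact hab (x i) (y i)
    have h2 : (hammingDist x y : ℝ) = ∑ i, (if x i = y i then (0:ℝ) else 1) := by
      rw [hammingDist, Finset.card_filter]
      push_cast
      refine Finset.sum_congr rfl fun i _ => ?_
      by_cases hxy : x i = y i <;> simp [hxy]
    calc ∑ i, E x i * E y i
        = ∑ i, (1 - 2 * (if x i = y i then (0:ℝ) else 1)) :=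
          Finset.sum_congr rfl fun i _ => h1 i
      _ = (n : ℝ) - 2 * ∑ i, (if x i = y i then (0:ℝ) else 1) := by
          rw [Finset.sum_sub_distrib, Finset.sum_const, ← Finset.mul_sum]
          simp
      _ = (n : ℝ) - 2 * (hammingDist x y : ℝ) := by rw [← h2]
  -- positivity of the full Gram sum
  have gram : 0 ≤ ∑ p ∈ C ×ˢ C, ∑ i, E p.1 i * E p.2 i := by
    rw [Finset.sum_product]
    have e1 : ∀ x, ∑ y ∈ C, ∑ i, E x i * E y i = ∑ i, E x i * ∑ y ∈ C, E y i := by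
      intro x
      rw [Finset.sum_comm]
      exact Finset.sum_congr rfl fun i _ => (Finset.mul_sum _ _ _).symm
    calc (0:ℝ) ≤ ∑ i, (∑ x ∈ C, E x i) * (∑ y ∈ C, E y i) :=
          Finset.sum_nonneg fun i _ => mul_self_nonneg _
      _ = ∑ x ∈ C, ∑ i, E x i * ∑ y ∈ C, E y i := by
          rw [Finset.sum_comm]
          exact Finset.sum_congr rfl fun i _ => Finset.sum_mul _ _ _
      _ = ∑ x ∈ C, ∑ y ∈ C, ∑ i, E x i * E y i :=
          (Finset.sum_congr rfl fun x _ => (e1 x).symm)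
  -- full sum of f over C × C is nonnegative
  have full_nonneg : 0 ≤ ∑ p ∈ C ×ˢ C, f p := by
    have : ∀ p : (Fin n → Fin 2) × (Fin n → Fin 2),
        f p = (∑ i, E p.1 i * E p.2 i) / n := by
      intro p
      rw [key p.1 p.2, hf]
      field_simp
    rw [Finset.sum_congr rfl fun p _ => this p, ← Finset.sum_div]
    positivity
  -- sum over the diagonal
  have diag_sum : ∑ p ∈ C.diag, f p = (M : ℝ) := by
    rw [Finset.sum_diag]
    have : ∀ x : Fin n → Fin 2, f (x, x) = 1 := by
      intro x; simp [hf, hammingDist_self]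
    rw [Finset.sum_congr rfl fun x _ => this x, Finset.sum_const, hcard, nsmul_eq_mul, mul_one]
  set S : ℝ := ∑ p ∈ C.offDiag, f p with hS
  have hsplit : ∑ p ∈ C ×ˢ C, f p = (M : ℝ) + S := by
    rw [← Finset.diag_union_offDiag C, Finset.sum_union (Finset.disjoint_diag_offDiag C),
      diag_sum]
  have S_lb : -(M : ℝ) ≤ S := by
    have := full_nonneg; rw [hsplit] at this; linarith
  -- cardinality of offDiag
  have hNnat : C.offDiag.card = M * M - M := by rw [Finset.offDiag_card, hcard]
  have hMM : M ≤ M * M := Nat.le_mul_of_pos_left M (by omega)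
  set NR : ℝ := (M : ℝ) * ((M : ℝ) - 1) with hNR
  have hNRpos : 0 < NR := by nlinarith
  have hcardR : (C.offDiag.card : ℝ) = NR := by
    rw [hNnat, Nat.cast_sub hMM]; push_cast; ring
  -- membership of the values in [-1, 1)
  have mem_f : ∀ p ∈ C.offDiag, f p ∈ Set.Ico (-1 : ℝ) 1 := by
    intro p hp
    rw [Finset.mem_offDiag] at hp
    have hd1 : 1 ≤ hammingDist p.1 p.2 := hammingDist_pos.2 hp.2.2
    have hd2 : hammingDist p.1 p.2 ≤ n := by
      simpa using (hammingDist_le_card_fintype (x := p.1) (y := p.2))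
    have hd1R : (1 : ℝ) ≤ (hammingDist p.1 p.2 : ℝ) := by exact_mod_cast hd1
    have hd2R : (hammingDist p.1 p.2 : ℝ) ≤ n := by exact_mod_cast hd2
    constructor
    · have : 2 * (hammingDist p.1 p.2 : ℝ) / n ≤ 2 := by
        rw [div_le_iff₀ hn0]; linarith
      simp only [hf]; linarith
    · have : 0 < 2 * (hammingDist p.1 p.2 : ℝ) / n := by positivity
      simp only [hf]; linarith
  have f_ub : ∀ p ∈ C.offDiag, f p ≤ 1 - 2 / n := by
    intro p hp
    rw [Finset.mem_offDiag] at hp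
    have hd1 : 1 ≤ hammingDist p.1 p.2 := hammingDist_pos.2 hp.2.2
    have hd1R : (1 : ℝ) ≤ (hammingDist p.1 p.2 : ℝ) := by exact_mod_cast hd1
    have h2d : 2 / (n:ℝ) ≤ 2 * (hammingDist p.1 p.2 : ℝ) / n := by
      gcongr
      linarith
    simp only [hf]; linarith
  -- the mean value
  set μ : ℝ := S / NR with hμ
  have hMne : (M : ℝ) - 1 ≠ 0 := by linarith
  have S_ub : S ≤ NR * (1 - 2 / n) := by
    calc S ≤ ∑ _p ∈ C.offDiag, (1 - 2 / (n:ℝ)) := Finset.sum_le_sum f_ub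
      _ = NR * (1 - 2 / n) := by rw [Finset.sum_const, nsmul_eq_mul, hcardR]
  have hμ_lb : -1 / ((M : ℝ) - 1) ≤ μ := by
    rw [hμ, le_div_iff₀ hNRpos]
    have heq : -1 / ((M : ℝ) - 1) * NR = -(M : ℝ) := by
      field_simp [hNR]; simp [hNR]
    rw [heq]
    exact S_lb
  have hinv1 : 1 / ((M:ℝ) - 1) ≤ 1 := by
    rw [div_le_one (by linarith)]; linarith
  have hinv0 : 0 < 1 / ((M:ℝ) - 1) := by positivity
  have hmem1 : -1 / ((M : ℝ) - 1) ∈ Set.Ico (-1 : ℝ) 1 := by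
    constructor
    · rw [neg_div]; linarith
    · rw [neg_div]; linarith
  have hμ_mem : μ ∈ Set.Ico (-1 : ℝ) 1 := by
    have hub : μ ≤ 1 - 2 / n := by
      rw [hμ, div_le_iff₀ hNRpos]
      linarith [S_ub]
    have h2n : 0 < 2 / (n:ℝ) := by positivity
    constructor
    · have := hmem1.1
      linarith [hμ_lb]
    · linarith
  -- Jensen's inequality
  have jensen := (absMono.convexOn hh).map_sum_le (t := C.offDiag)
    (w := fun _ => NR⁻¹) (p := f)
    (fun _ _ => by positivity)
    (by rw [Finset.sum_const, nsmul_eq_mul, hcardR]; field_simp)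
    mem_f
  have hsum_eq : ∑ p ∈ C.offDiag, NR⁻¹ • f p = μ := by
    simp only [smul_eq_mul]
    rw [← Finset.mul_sum, hμ, ← hS, inv_mul_eq_div]
  rw [hsum_eq] at jensen
  have henergy : hammingEnergy n h C = ∑ p ∈ C.offDiag, h (f p) := rfl
  have hj2 : NR * h μ ≤ hammingEnergy n h C := by
    have : ∑ p ∈ C.offDiag, NR⁻¹ • h (f p) = NR⁻¹ * hammingEnergy n h C := by
      simp only [smul_eq_mul]
      rw [← Finset.mul_sum, henergy]
    rw [this] at jensen
    calc NR * h μ ≤ NR * (NR⁻¹ * hammingEnergy n h C) := by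
          exact mul_le_mul_of_nonneg_left jensen hNRpos.le
      _ = hammingEnergy n h C := by field_simp
  have hmono : h (-1 / ((M : ℝ) - 1)) ≤ h μ :=
    (absMono.monotoneOn hh) hmem1 hμ_mem hμ_lb
  calc (M : ℝ) * ((M : ℝ) - 1) * h (-1 / ((M : ℝ) - 1))
      = NR * h (-1 / ((M : ℝ) - 1)) := by rw [hNR]
    _ ≤ NR * h μ := mul_le_mul_of_nonneg_left hmono hNRpos.le
    _ ≤ hammingEnergy n h C := hj2
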